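/- arXiv:2106.04762 — 2 statements merged into one kernel-verified Lean document; each statement's English description precedes it below -/
import Mathlib

section
/- Let κ ≥ 1 and suppose a₁,…,a_κ : [0,T] → ℝ are C¹ functions solving the backward Riccati system a_y'(t) + C₁ b₁_y(t) a_y(t) − C₂ b₂_y(t)² a_y(t)² + ∑_{i=1}^κ q_{y,i} a_i(t) + h_y = 0 with a_y(T) = g_y, where h_y > 0, g_y > 0, C₁, C₂ > 0, q_{y,i} ≥ 0 for i ≠ y, ∑_i q_{y,i} = 0, and b₁_y, b₂_y continuous. Then a_y(t) > 0 for all t ∈ [0,T] and all y. -/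
open Set Filter Topology

/-- positivity of the solution of the backward Riccati system
a_y' + C₁b₁_y a_y − C₂b₂_y² a_y² + ∑ᵢ q_{y,i} a_i + h_y = 0, a_y(T) = g_y > 0,
with h_y > 0, q a generator matrix. -/
theorem stmt11 (κ : ℕ) (hκ : 1 ≤ κ) (T C₁ C₂ : ℝ)
    (hT : 0 < T) (hC₁ : 0 < C₁) (hC₂ : 0 < C₂)
    (b₁ b₂ : Fin κ → ℝ → ℝ) (hb₁ : ∀ y, Continuous (b₁ y)) (hb₂ : ∀ y, Continuous (b₂ y))
    (q : Fin κ → Fin κ → ℝ) (hqoff : ∀ y i, y ≠ i → 0 ≤ q y i)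
    (hqsum : ∀ y, (∑ i, q y i) = 0)
    (h g : Fin κ → ℝ) (hh : ∀ y, 0 < h y) (hg : ∀ y, 0 < g y)
    (a : Fin κ → ℝ → ℝ)
    (haC : ∀ y, ContinuousOn (a y) (Icc 0 T))
    (hode : ∀ y, ∀ t ∈ Icc (0 : ℝ) T,
      HasDerivAt (a y)
        (-(C₁ * b₁ y t * a y t - C₂ * (b₂ y t) ^ 2 * (a y t) ^ 2
          + (∑ i, q y i * a i t) + h y)) t)
    (hterm : ∀ y, a y T = g y) :
    ∀ y, ∀ t ∈ Icc (0 : ℝ) T, 0 < a y t := by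
  by_contra hcon
  push_neg at hcon
  obtain ⟨y₀, t₀, ht₀, ha₀⟩ := hcon
  -- the set of bad times
  set S : Set ℝ := ⋃ i, (Icc 0 T ∩ (a i) ⁻¹' Iic 0) with hS
  have hSsub : S ⊆ Icc 0 T := by
    intro t ht
    simp only [hS, mem_iUnion, mem_inter_iff] at ht
    exact ht.choose_spec.1
  have hSclosed : IsClosed S := by
    apply isClosed_iUnion_of_finite
    intro i
    exact (haC i).preimage_isClosed_of_isClosed isClosed_Icc isClosed_Iic
  have hSne : S.Nonempty := ⟨t₀, by
    simp only [hS, mem_iUnion, mem_inter_iff, mem_preimage, mem_Iic]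
    exact ⟨y₀, ht₀, ha₀⟩⟩
  have hScomp : IsCompact S := isCompact_Icc.of_isClosed_subset hSclosed hSsub
  set τ := sSup S with hτ
  have hτS : τ ∈ S := hScomp.sSup_mem hSne
  have hτIcc : τ ∈ Icc 0 T := hSsub hτS
  obtain ⟨y, hyτ⟩ : ∃ y, a y τ ≤ 0 := by
    simp only [hS, mem_iUnion, mem_inter_iff, mem_preimage, mem_Iic] at hτS
    exact ⟨hτS.choose, hτS.choose_spec.2⟩
  have hτT : τ < T := by
    rcases lt_or_eq_of_le hτIcc.2 with h' | h'
    · exact h'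
    · exfalso
      rw [h', hterm y] at hyτ
      exact absurd hyτ (not_le.mpr (hg y))
  -- all a i are positive strictly after τ
  have hpos : ∀ t ∈ Ioc τ T, ∀ i, 0 < a i t := by
    intro t ht i
    by_contra hle
    push_neg at hle
    have htS : t ∈ S := by
      simp only [hS, mem_iUnion, mem_inter_iff, mem_preimage, mem_Iic]
      exact ⟨i, ⟨le_trans hτIcc.1 ht.1.le, ht.2⟩, hle⟩
    exact absurd (le_csSup hScomp.bddAbove htS) (not_le.mpr ht.1)
  -- hence all a i τ ≥ 0 by right continuity
  have hnb : (𝓝[Ioc τ T] τ).NeBot := by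
    rw [nhdsWithin_Ioc_eq_nhdsGT hτT]
    infer_instance
  have hnonneg : ∀ i, 0 ≤ a i τ := by
    intro i
    have hc : Filter.Tendsto (a i) (𝓝[Ioc τ T] τ) (𝓝 (a i τ)) := by
      apply ((haC i τ hτIcc).mono _)
      intro x hx
      exact ⟨le_trans hτIcc.1 hx.1.le, hx.2⟩
    refine ge_of_tendsto hc ?_
    filter_upwards [self_mem_nhdsWithin] with x hx
    exact (hpos x hx i).le
  have hyτ0 : a y τ = 0 := le_antisymm hyτ (hnonneg y)
  -- the derivative at τ
  have hd := hode y τ hτIcc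
  rw [hyτ0] at hd
  set d := -(C₁ * b₁ y τ * 0 - C₂ * b₂ y τ ^ 2 * 0 ^ 2 + (∑ i, q y i * a i τ) + h y)
    with hdeq
  -- d is negative
  have hsum_nonneg : 0 ≤ ∑ i, q y i * a i τ := by
    apply Finset.sum_nonneg
    intro i _
    rcases eq_or_ne y i with rfl | hne
    · rw [hyτ0]; simp
    · exact mul_nonneg (hqoff y i hne) (hnonneg i)
  have hdneg : d < 0 := by
    rw [hdeq]
    have : 0 < C₁ * b₁ y τ * 0 - C₂ * b₂ y τ ^ 2 * 0 ^ 2 + (∑ i, q y i * a i τ) + h y := by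
      have := hh y
      nlinarith
    linarith
  -- but d must be nonnegative by the right difference quotient
  have hslope : Filter.Tendsto (slope (a y) τ) (𝓝[>] τ) (𝓝 d) := by
    have := hasDerivAt_iff_tendsto_slope.mp hd
    exact this.mono_left (nhdsWithin_mono τ (fun x hx => ne_of_gt hx))
  have hmem : Ioc τ T ∈ 𝓝[>] τ := Ioc_mem_nhdsGT_of_mem ⟨le_refl τ, hτT⟩
  have hdnonneg : 0 ≤ d := by
    apply ge_of_tendsto hslope
    filter_upwards [hmem] with t ht
    rw [slope_def_field, hyτ0, sub_zero]
    exact div_nonneg (hpos t ht y).le (by linarith [ht.1])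
  linarith
end

section
/- Let N ≥ 2 and for each y ∈ {1,…,κ} let â_y^N solve the backward ODE (â_y^N)' + 2b₁_y â_y^N − (2(N+1)/N) b₂_y² (â_y^N)² + ∑_i q_{y,i} â_i^N + h_y = 0 with â_y^N(T) = g_y, and let a_y solve a_y' + 2b₁_y a_y − 2 b₂_y² a_y² + ∑_i q_{y,i} a_i + h_y = 0 with a_y(T) = g_y. Assume both solutions exist on [0,T] and are uniformly bounded in N together with the coefficients by some K₁. Then sup_{t∈[0,T]} max_y |â_y^N(t) − a_y(t)| ≤ K/N for a constant K independent of N. -/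
open Set Finset Metric NNReal

/-! Both equations read `u' = -riccatiField … c u`, with `c = 2` for `a` and `c = 2(N+1)/N` for
`âᴺ`. At a common point the two fields differ by `(c - 2) b₂² x²`, of size `2K₁⁴/N` on the
sup-norm ball of radius `K₁` where both solutions live, and the field with `c = 2` is Lipschitz
on that ball. Reversing time turns the backward equations with common terminal value into
forward ones with common initial value, and Grönwall's comparison of approximate trajectories
gives `|âᴺ - a| ≤ (2K₁⁴/N) (e^{LT} - 1)/L`. -/

theorem dist_le_of_approx_trajectories_backward_ODE_of_mem {E : Type*} [NormedAddCommGroup E]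
    [NormedSpace ℝ E] {v : ℝ → E → E} {s : Set E} {L : ℝ≥0} {f g f' : ℝ → E} {a b ε : ℝ}
    (hv : ∀ t ∈ Icc a b, LipschitzOnWith L (v t) s)
    (hf : ContinuousOn f (Icc a b)) (hf' : ∀ t ∈ Icc a b, HasDerivAt f (-f' t) t)
    (f_bound : ∀ t ∈ Icc a b, dist (f' t) (v t (f t)) ≤ ε) (hfs : ∀ t ∈ Icc a b, f t ∈ s)
    (hg : ContinuousOn g (Icc a b)) (hg' : ∀ t ∈ Icc a b, HasDerivAt g (-v t (g t)) t)
    (hgs : ∀ t ∈ Icc a b, g t ∈ s) (hb : f b = g b) :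
    ∀ t ∈ Icc a b, dist (f t) (g t) ≤ gronwallBound 0 L ε (b - t) := by
  set r : ℝ → ℝ := fun t => a + b - t
  have hr : ∀ t ∈ Icc a b, r t ∈ Icc a b := fun t ht => ⟨by linarith [ht.2], by linarith [ht.1]⟩
  have hr₀ : ∀ t ∈ Ico a b, r t ∈ Icc a b := fun t ht => hr t (Ico_subset_Icc_self ht)
  have hrc : ContinuousOn r (Icc a b) := by fun_prop
  have hr' : ∀ t, HasDerivAt r (-1) t := fun t => by
    simpa using (hasDerivAt_id t).const_sub (a + b)
  have reflect : ∀ {u u' : ℝ → E}, (∀ t ∈ Icc a b, HasDerivAt u (-u' t) t) →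
      ∀ t ∈ Ico a b, HasDerivWithinAt (u ∘ r) (u' (r t)) (Ici t) t := fun hu t ht => by
    simpa using ((hu (r t) (hr₀ t ht)).scomp t (hr' t)).hasDerivWithinAt
  have hcomp := dist_le_of_approx_trajectories_ODE_of_mem (v := fun t => v (r t)) (εg := 0)
    (δ := 0) (fun t ht => hv _ (hr₀ t ht)) (hf.comp hrc hr) (reflect hf')
    (fun t ht => f_bound _ (hr₀ t ht)) (fun t ht => hfs _ (hr₀ t ht)) (hg.comp hrc hr)
    (reflect hg') (fun _ _ => (dist_self _).le) (fun t ht => hgs _ (hr₀ t ht)) (by simp [r, hb])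
  intro t ht
  have hrr : r (r t) = t := by simp [r]
  have key := hcomp (r t) (hr t ht)
  rwa [Function.comp_apply, Function.comp_apply, hrr, add_zero,
    show r t - a = b - t by simp only [r]; ring] at key

def riccatiField {ι : Type*} [Fintype ι] (b₁ b₂ h : ι → ℝ) (q : ι → ι → ℝ) (c : ℝ)
    (x : ι → ℝ) : ι → ℝ :=
  fun y => 2 * b₁ y * x y - c * b₂ y ^ 2 * x y ^ 2 + ∑ i, q y i * x i + h y

section RiccatiField

variable {ι : Type*} [Fintype ι] {b₁ b₂ h : ι → ℝ} {q : ι → ι → ℝ} {K : ℝ}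

lemma riccatiField_apply_sub_apply (c : ℝ) (x z : ι → ℝ) (y : ι) :
    riccatiField b₁ b₂ h q c x y - riccatiField b₁ b₂ h q c z y =
      (2 * b₁ y - c * b₂ y ^ 2 * (x y + z y)) * (x y - z y) + ∑ i, q y i * (x i - z i) := by
  simp only [riccatiField, mul_sub, sum_sub_distrib]
  ring

lemma dist_riccatiField_le (hb₁ : ∀ y, |b₁ y| ≤ K) (hb₂ : ∀ y, |b₂ y| ≤ K)
    (hq : ∀ y i, |q y i| ≤ K) (c : ℝ) {x z : ι → ℝ} (hx : ‖x‖ ≤ K) (hz : ‖z‖ ≤ K) :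
    dist (riccatiField b₁ b₂ h q c x) (riccatiField b₁ b₂ h q c z) ≤
      (2 * K + 2 * |c| * K ^ 3 + Fintype.card ι * K) * dist x z := by
  have hK : 0 ≤ K := (norm_nonneg x).trans hx
  rw [dist_eq_norm, dist_eq_norm]
  refine (pi_norm_le_iff_of_nonneg (by positivity)).2 fun y => ?_
  have hcomp : ∀ i, |x i - z i| ≤ ‖x - z‖ := fun i => norm_le_pi_norm (x - z) i
  have hxz : |x y + z y| ≤ K + K :=
    (abs_add_le _ _).trans (add_le_add ((norm_le_pi_norm x y).trans hx)
      ((norm_le_pi_norm z y).trans hz))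
  have hcoef : |2 * b₁ y - c * b₂ y ^ 2 * (x y + z y)| ≤ 2 * K + 2 * |c| * K ^ 3 :=
    calc _ ≤ |2 * b₁ y| + |c * b₂ y ^ 2 * (x y + z y)| := abs_sub _ _
      _ = 2 * |b₁ y| + |c| * |b₂ y| ^ 2 * |x y + z y| := by simp [abs_mul, abs_pow]
      _ ≤ 2 * K + |c| * K ^ 2 * (K + K) := by gcongr; exacts [hb₁ y, hb₂ y]
      _ = 2 * K + 2 * |c| * K ^ 3 := by ring
  have hsum : |∑ i, q y i * (x i - z i)| ≤ Fintype.card ι * K * ‖x - z‖ :=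
    calc _ ≤ ∑ i, |q y i| * |x i - z i| := by
          simpa only [abs_mul] using abs_sum_le_sum_abs (fun i => q y i * (x i - z i)) univ
      _ ≤ ∑ _i : ι, K * ‖x - z‖ := by gcongr with i; exacts [hq y i, hcomp i]
      _ = Fintype.card ι * K * ‖x - z‖ := by simp [mul_assoc]
  rw [Real.norm_eq_abs, Pi.sub_apply, riccatiField_apply_sub_apply]
  calc _ ≤ |2 * b₁ y - c * b₂ y ^ 2 * (x y + z y)| * |x y - z y|
        + |∑ i, q y i * (x i - z i)| := by rw [← abs_mul]; exact abs_add_le _ _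
    _ ≤ (2 * K + 2 * |c| * K ^ 3) * ‖x - z‖ + Fintype.card ι * K * ‖x - z‖ := by
        gcongr; exact hcomp y
    _ = _ := by ring

lemma lipschitzOnWith_riccatiField (hb₁ : ∀ y, |b₁ y| ≤ K) (hb₂ : ∀ y, |b₂ y| ≤ K)
    (hq : ∀ y i, |q y i| ≤ K) (c : ℝ) :
    LipschitzOnWith (2 * K + 2 * |c| * K ^ 3 + Fintype.card ι * K).toNNReal
      (riccatiField b₁ b₂ h q c) (closedBall 0 K) :=
  LipschitzOnWith.of_dist_le' fun _x hx _z hz =>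
    dist_riccatiField_le hb₁ hb₂ hq c (mem_closedBall_zero_iff.1 hx) (mem_closedBall_zero_iff.1 hz)

lemma dist_riccatiField_riccatiField_le (hb₂ : ∀ y, |b₂ y| ≤ K) (c c' : ℝ) {x : ι → ℝ}
    (hx : ‖x‖ ≤ K) :
    dist (riccatiField b₁ b₂ h q c x) (riccatiField b₁ b₂ h q c' x) ≤ |c' - c| * K ^ 4 := by
  have hK : 0 ≤ K := (norm_nonneg x).trans hx
  rw [dist_eq_norm]
  refine (pi_norm_le_iff_of_nonneg (by positivity)).2 fun y => ?_
  have hdiff : (riccatiField b₁ b₂ h q c x - riccatiField b₁ b₂ h q c' x) y =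
      (c' - c) * b₂ y ^ 2 * x y ^ 2 := by
    simp only [Pi.sub_apply, riccatiField]
    ring
  have hxy : |x y| ≤ K := (norm_le_pi_norm x y).trans hx
  rw [Real.norm_eq_abs, hdiff, abs_mul, abs_mul, abs_pow, abs_pow]
  calc _ ≤ |c' - c| * K ^ 2 * K ^ 2 := by gcongr; exact hb₂ y
    _ = _ := by ring

end RiccatiField

lemma gronwallBound_zero_le {K ε x T : ℝ} (hK : 0 < K) (hε : 0 ≤ ε) (hx : x ≤ T) :
    gronwallBound 0 K ε x ≤ ε / K * (Real.exp (K * T) - 1) := by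
  simp only [gronwallBound_of_K_ne_0 hK.ne', zero_mul, zero_add]
  gcongr

theorem stmt15_general (κ : ℕ) (T K₁ : ℝ) (hK₁ : 0 < K₁)
    (b₁ b₂ : Fin κ → ℝ → ℝ)
    (hb₁bd : ∀ y, ∀ t ∈ Icc (0 : ℝ) T, |b₁ y t| ≤ K₁)
    (hb₂bd : ∀ y, ∀ t ∈ Icc (0 : ℝ) T, |b₂ y t| ≤ K₁)
    (q : Fin κ → Fin κ → ℝ) (hq : ∀ y i, |q y i| ≤ K₁)
    (h g : Fin κ → ℝ)
    (a : Fin κ → ℝ → ℝ) (haC : ∀ y, ContinuousOn (a y) (Icc 0 T))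
    (ha : ∀ y, ∀ t ∈ Icc (0 : ℝ) T,
      HasDerivAt (a y)
        (-(2 * b₁ y t * a y t - 2 * (b₂ y t) ^ 2 * (a y t) ^ 2
          + (∑ i, q y i * a i t) + h y)) t)
    (haT : ∀ y, a y T = g y)
    (habd : ∀ y, ∀ t ∈ Icc (0 : ℝ) T, |a y t| ≤ K₁) :
    ∃ K : ℝ, ∀ N : ℕ, 2 ≤ N → ∀ ahat : Fin κ → ℝ → ℝ,
      (∀ y, ContinuousOn (ahat y) (Icc 0 T)) →
      (∀ y, ∀ t ∈ Icc (0 : ℝ) T,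
        HasDerivAt (ahat y)
          (-(2 * b₁ y t * ahat y t
            - (2 * ((N : ℝ) + 1) / N) * (b₂ y t) ^ 2 * (ahat y t) ^ 2
            + (∑ i, q y i * ahat i t) + h y)) t) →
      (∀ y, ahat y T = g y) →
      (∀ y, ∀ t ∈ Icc (0 : ℝ) T, |ahat y t| ≤ K₁) →
      ∀ t ∈ Icc (0 : ℝ) T, ∀ y, |ahat y t - a y t| ≤ K / N := by
  set L := 2 * K₁ + 2 * |(2 : ℝ)| * K₁ ^ 3 + Fintype.card (Fin κ) * K₁
  have hL : 0 < L := by positivity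
  refine ⟨2 * K₁ ^ 4 / L * (Real.exp (L * T) - 1),
    fun N hN ahat ahatC hahat hahatT hahatbd t ht y => ?_⟩
  have hN0 : (0 : ℝ) < N := by positivity
  set c : ℝ := 2 * ((N : ℝ) + 1) / N
  have hc : |2 - c| = 2 / N := by
    rw [show 2 - c = -(2 / N) by simp only [c]; field_simp; ring, abs_neg,
      abs_of_pos (by positivity)]
  have hball : ∀ u : Fin κ → ℝ → ℝ, (∀ y, ∀ s ∈ Icc 0 T, |u y s| ≤ K₁) →
      ∀ s ∈ Icc 0 T, (fun y => u y s) ∈ closedBall 0 K₁ := fun u hu s hs =>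
    mem_closedBall_zero_iff.2 ((pi_norm_le_iff_of_nonneg hK₁.le).2 fun y => hu y s hs)
  set F : ℝ → ℝ → (Fin κ → ℝ) → Fin κ → ℝ := fun c s => riccatiField (b₁ · s) (b₂ · s) h q c
  have hdist := dist_le_of_approx_trajectories_backward_ODE_of_mem (v := F 2)
    (f' := fun s => F c s (fun y => ahat y s))
    (fun s hs => lipschitzOnWith_riccatiField (hb₁bd · s hs) (hb₂bd · s hs) hq 2)
    (continuousOn_pi.2 ahatC) (fun s hs => hasDerivAt_pi.2 fun y => hahat y s hs)
    (fun s hs => dist_riccatiField_riccatiField_le (hb₂bd · s hs) c 2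
      (mem_closedBall_zero_iff.1 (hball _ hahatbd s hs)))
    (hball _ hahatbd) (continuousOn_pi.2 haC) (fun s hs => hasDerivAt_pi.2 fun y => ha y s hs)
    (hball _ habd) (funext fun y => (hahatT y).trans (haT y).symm) t ht
  rw [Real.coe_toNNReal _ hL.le, hc] at hdist
  calc |ahat y t - a y t| ≤ dist (fun y => ahat y t) (fun y => a y t) :=
        (Real.dist_eq _ _).symm.le.trans (dist_le_pi_dist (fun y => ahat y t) (fun y => a y t) y)
    _ ≤ gronwallBound 0 L (2 / N * K₁ ^ 4) (T - t) := hdist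
    _ ≤ 2 / N * K₁ ^ 4 / L * (Real.exp (L * T) - 1) :=
        gronwallBound_zero_le hL (by positivity) (by linarith [ht.1])
    _ = 2 * K₁ ^ 4 / L * (Real.exp (L * T) - 1) / N := by ring

/-- the solution âᴺ of the N-player Riccati equation converges to the
MFG Riccati solution a at rate 1/N, uniformly on [0,T], with K independent of N. -/
theorem stmt15 (κ : ℕ) (hκ : 1 ≤ κ) (T K₁ : ℝ) (hT : 0 < T) (hK₁ : 0 < K₁)
    (b₁ b₂ : Fin κ → ℝ → ℝ) (hb₁ : ∀ y, Continuous (b₁ y)) (hb₂ : ∀ y, Continuous (b₂ y))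
    (hb₁bd : ∀ y, ∀ t ∈ Icc (0 : ℝ) T, |b₁ y t| ≤ K₁)
    (hb₂bd : ∀ y, ∀ t ∈ Icc (0 : ℝ) T, |b₂ y t| ≤ K₁)
    (q : Fin κ → Fin κ → ℝ) (hq : ∀ y i, |q y i| ≤ K₁)
    (h g : Fin κ → ℝ)
    (a : Fin κ → ℝ → ℝ) (haC : ∀ y, ContinuousOn (a y) (Icc 0 T))
    (ha : ∀ y, ∀ t ∈ Icc (0 : ℝ) T,
      HasDerivAt (a y)
        (-(2 * b₁ y t * a y t - 2 * (b₂ y t) ^ 2 * (a y t) ^ 2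
          + (∑ i, q y i * a i t) + h y)) t)
    (haT : ∀ y, a y T = g y)
    (habd : ∀ y, ∀ t ∈ Icc (0 : ℝ) T, |a y t| ≤ K₁) :
    ∃ K : ℝ, ∀ N : ℕ, 2 ≤ N → ∀ ahat : Fin κ → ℝ → ℝ,
      (∀ y, ContinuousOn (ahat y) (Icc 0 T)) →
      (∀ y, ∀ t ∈ Icc (0 : ℝ) T,
        HasDerivAt (ahat y)
          (-(2 * b₁ y t * ahat y t
            - (2 * ((N : ℝ) + 1) / N) * (b₂ y t) ^ 2 * (ahat y t) ^ 2
            + (∑ i, q y i * ahat i t) + h y)) t) →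
      (∀ y, ahat y T = g y) →
      (∀ y, ∀ t ∈ Icc (0 : ℝ) T, |ahat y t| ≤ K₁) →
      ∀ t ∈ Icc (0 : ℝ) T, ∀ y, |ahat y t - a y t| ≤ K / N :=
  stmt15_general κ T K₁ hK₁ b₁ b₂ hb₁bd hb₂bd q hq h g a haC ha haT habd
end
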